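/- arXiv:2109.13787 — 6 statements merged into one kernel-verified Lean document; each statement's English description precedes it below -/
import Mathlib

section
/- Let Ω be a set, let 𝒢 be a σ-algebra on Ω, and let f : Ω → ℝ be any function. A function Y : Ω → ℝ is measurable with respect to the σ-algebra 𝒢 ⊔ σ(f) (the smallest σ-algebra containing 𝒢 and making f Borel-measurable) if and only if there exists a function h : Ω × ℝ → ℝ, measurable with respect to the product σ-algebra of 𝒢 and the Borel σ-algebra on ℝ, such that Y(ω) = h(ω, f(ω)) for all ω ∈ Ω. -/
open MeasurableSpace MeasureTheory

theorem MeasurableSpace.comap_prodMk_prod_eq_sup {α β : Type*} (m : MeasurableSpace α)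
    (mβ : MeasurableSpace β) (f : α → β) :
    (m.prod mβ).comap (fun a => (a, f a)) = m ⊔ mβ.comap f := by
  rw [MeasurableSpace.prod, comap_sup, comap_comp, comap_comp]
  exact congrArg (· ⊔ _) comap_id

/-- Doob–Dynkin applied to the graph map `a ↦ (a, f a)`. -/
theorem measurable_sup_comap_iff_exists_measurable_prodMk {α β Z : Type*}
    [MeasurableSpace Z] [StandardBorelSpace Z] [Nonempty Z] (m : MeasurableSpace α)
    (mβ : MeasurableSpace β) (f : α → β) (Y : α → Z) :
    Measurable[m ⊔ mβ.comap f] Y ↔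
      ∃ h : α × β → Z, Measurable[m.prod mβ] h ∧ ∀ a, Y a = h (a, f a) := by
  rw [← comap_prodMk_prod_eq_sup]
  constructor
  · intro hY
    obtain ⟨h, hh, rfl⟩ := hY.exists_eq_measurable_comp
    exact ⟨h, hh, fun _ => rfl⟩
  · rintro ⟨h, hh, hY⟩
    rw [funext hY]
    exact hh.comp (comap_measurable _)

/-- A process is measurable w.r.t. the σ-algebra generated by `G` and the signal `f`
iff it is a `G ⊗ Borel`-measurable function of `ω` and the signal value `f ω`. -/
theorem meyer_field_representation {Ω : Type*} (G : MeasurableSpace Ω) (f : Ω → ℝ)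
    (Y : Ω → ℝ) :
    @Measurable Ω ℝ (G ⊔ MeasurableSpace.comap f (borel ℝ)) (borel ℝ) Y ↔
      ∃ h : Ω × ℝ → ℝ,
        @Measurable (Ω × ℝ) ℝ (G.prod (borel ℝ)) (borel ℝ) h ∧ ∀ ω, Y ω = h (ω, f ω) :=
  measurable_sup_comap_iff_exists_measurable_prodMk G (borel ℝ) f Y
end

section
/- Let κ be a finite measure on a measurable space E and let η : E → ℝ be measurable with η(e) ≥ −1 for κ-a.e. e, κ({e : η(e) > 0}) > 0 and κ({e : η(e) < 0}) > 0. Define a as the essential supremum of e ↦ −1/η(e) with respect to the restriction of κ to {η > 0}, and b as the essential infimum of e ↦ −1/η(e) with respect to the restriction of κ to {η < 0}. Then a and b are real numbers with a ≤ 0 and b ≥ 1, and the set {φ ∈ ℝ : 1 + φ·η(e) ≥ 0 for κ-a.e. e} equals the closed interval [a, b]; in particular [0,1] ⊆ [a, b]. -/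
open MeasureTheory

/-! Where `η > 0` the constraint `0 ≤ 1 + φ η` reads `-1/η ≤ φ`, and where `η < 0` it reads
`φ ≤ -1/η`; so it holds a.e. exactly when `a ≤ φ ≤ b`, with `a, b` taken in `EReal`.
Since `0` is always admissible, and `1` is because `η ≥ -1`, we get `a ≤ 0` and `1 ≤ b`;
as `{η > 0}` and `{η < 0}` are not null, neither bound is infinite. -/

section EssSup

variable {α β : Type*} [MeasurableSpace α] {μ : Measure α} [CompleteLinearOrder β]
  [TopologicalSpace β] [FirstCountableTopology β] [OrderTopology β] {f : α → β}

theorem essSup_le_iff_ae_le {c : β} : essSup f μ ≤ c ↔ ∀ᵐ x ∂μ, f x ≤ c :=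
  ⟨fun h => (ae_le_essSup (f := f)).mono fun _ hx => hx.trans h, essSup_le_of_ae_le c⟩

theorem le_essInf_iff_ae_le {c : β} : c ≤ essInf f μ ↔ ∀ᵐ x ∂μ, c ≤ f x :=
  ⟨fun h => (ae_essInf_le (f := f)).mono fun _ hx => h.trans hx, le_essInf_of_ae_le c⟩

theorem essSup_ne_bot (hμ : μ ≠ 0) (hf : ∀ x, f x ≠ ⊥) : essSup f μ ≠ ⊥ := by
  rw [ne_eq, ← le_bot_iff, essSup_le_iff_ae_le]
  intro h
  have := ae_neBot.2 hμ
  obtain ⟨x, hx⟩ := h.exists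
  exact hf x (le_bot_iff.mp hx)

theorem essInf_ne_top (hμ : μ ≠ 0) (hf : ∀ x, f x ≠ ⊤) : essInf f μ ≠ ⊤ :=
  essSup_ne_bot (β := βᵒᵈ) hμ hf

end EssSup

theorem one_add_mul_nonneg_iff_of_pos {t : ℝ} (ht : 0 < t) (φ : ℝ) :
    0 ≤ 1 + φ * t ↔ -1 / t ≤ φ := by
  rw [div_le_iff₀ ht]
  constructor <;> intro h <;> linarith

theorem one_add_mul_nonneg_iff_of_neg {t : ℝ} (ht : t < 0) (φ : ℝ) :
    0 ≤ 1 + φ * t ↔ φ ≤ -1 / t := by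
  rw [le_div_iff_of_neg ht]
  constructor <;> intro h <;> linarith

section Admissible

variable {E : Type*} [MeasurableSpace E] (κ : Measure E) (η : E → ℝ)

/-- The paper's admissible range `Φ^z`, for `κ = K(z, ·)`. -/
def admissibleFractions : Set ℝ := {φ | ∀ᵐ e ∂κ, 0 ≤ 1 + φ * η e}

noncomputable def admissibleLowerBound : EReal :=
  essSup (fun e => ((-1 / η e : ℝ) : EReal)) (κ.restrict {e | 0 < η e})

noncomputable def admissibleUpperBound : EReal :=
  essInf (fun e => ((-1 / η e : ℝ) : EReal)) (κ.restrict {e | η e < 0})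

variable {κ η}

theorem ae_one_add_mul_nonneg_iff (hη : Measurable η) (φ : ℝ) :
    (∀ᵐ e ∂κ, 0 ≤ 1 + φ * η e) ↔
      (∀ᵐ e ∂κ.restrict {e | 0 < η e}, -1 / η e ≤ φ) ∧
        ∀ᵐ e ∂κ.restrict {e | η e < 0}, φ ≤ -1 / η e := by
  rw [ae_restrict_iff' (measurableSet_lt measurable_const hη),
    ae_restrict_iff' (measurableSet_lt hη measurable_const), ← Filter.eventually_and]
  refine Filter.eventually_congr (Filter.Eventually.of_forall fun e => ?_)
  rcases lt_trichotomy (η e) 0 with hneg | hzero | hpos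
  · simp [one_add_mul_nonneg_iff_of_neg hneg, hneg, hneg.not_gt]
  · simp [hzero]
  · simp [one_add_mul_nonneg_iff_of_pos hpos, hpos, hpos.not_gt]

theorem mem_admissibleFractions_iff (hη : Measurable η) (φ : ℝ) :
    φ ∈ admissibleFractions κ η ↔
      admissibleLowerBound κ η ≤ φ ∧ (φ : EReal) ≤ admissibleUpperBound κ η := by
  simp only [admissibleFractions, Set.mem_ofPred_eq, ae_one_add_mul_nonneg_iff hη,
    admissibleLowerBound, admissibleUpperBound, essSup_le_iff_ae_le, le_essInf_iff_ae_le,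
    EReal.coe_le_coe_iff]

theorem zero_mem_admissibleFractions : 0 ∈ admissibleFractions κ η := by
  simp [admissibleFractions]

theorem one_mem_admissibleFractions (hge : ∀ᵐ e ∂κ, -1 ≤ η e) :
    1 ∈ admissibleFractions κ η :=
  hge.mono fun e he => by linarith

theorem admissibleLowerBound_ne_bot (hpos : κ {e | 0 < η e} ≠ 0) :
    admissibleLowerBound κ η ≠ ⊥ :=
  essSup_ne_bot (Measure.restrict_eq_zero.not.mpr hpos) fun _ => EReal.coe_ne_bot _

theorem admissibleUpperBound_ne_top (hneg : κ {e | η e < 0} ≠ 0) :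
    admissibleUpperBound κ η ≠ ⊤ :=
  essInf_ne_top (Measure.restrict_eq_zero.not.mpr hneg) fun _ => EReal.coe_ne_top _

theorem admissibleLowerBound_le_zero (hη : Measurable η) : admissibleLowerBound κ η ≤ 0 :=
  ((mem_admissibleFractions_iff hη 0).mp zero_mem_admissibleFractions).1

theorem zero_le_admissibleUpperBound (hη : Measurable η) : 0 ≤ admissibleUpperBound κ η :=
  ((mem_admissibleFractions_iff hη 0).mp zero_mem_admissibleFractions).2

theorem exists_admissibleFractions_eq_Icc (hη : Measurable η)
    (hpos : κ {e | 0 < η e} ≠ 0) (hneg : κ {e | η e < 0} ≠ 0) :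
    ∃ a b : ℝ, admissibleLowerBound κ η = a ∧ admissibleUpperBound κ η = b ∧
      admissibleFractions κ η = Set.Icc a b := by
  have hL := EReal.coe_toReal (ne_top_of_le_ne_top EReal.zero_ne_top
    (admissibleLowerBound_le_zero hη)) (admissibleLowerBound_ne_bot hpos)
  have hU := EReal.coe_toReal (admissibleUpperBound_ne_top hneg)
    (ne_bot_of_le_ne_bot EReal.zero_ne_bot (zero_le_admissibleUpperBound hη))
  refine ⟨_, _, hL.symm, hU.symm, Set.ext fun φ => ?_⟩
  conv_lhs => rw [mem_admissibleFractions_iff hη, ← hL, ← hU]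
  rw [EReal.coe_le_coe_iff, EReal.coe_le_coe_iff, Set.mem_Icc]

end Admissible

theorem admissible_fraction_interval_general {E : Type*} [MeasurableSpace E]
    (κ : Measure E)
    (η : E → ℝ) (hη : Measurable η)
    (hge : ∀ᵐ e ∂κ, -1 ≤ η e)
    (hpos : 0 < κ {e | 0 < η e}) (hneg : 0 < κ {e | η e < 0}) :
    ∃ a b : ℝ,
      essSup (fun e => ((-1 / η e : ℝ) : EReal)) (κ.restrict {e | 0 < η e}) = (a : EReal) ∧
      essInf (fun e => ((-1 / η e : ℝ) : EReal)) (κ.restrict {e | η e < 0}) = (b : EReal) ∧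
      a ≤ 0 ∧ 1 ≤ b ∧
      {φ : ℝ | ∀ᵐ e ∂κ, 0 ≤ 1 + φ * η e} = Set.Icc a b ∧
      Set.Icc (0 : ℝ) 1 ⊆ Set.Icc a b := by
  obtain ⟨a, b, hL, hU, hIcc⟩ := exists_admissibleFractions_eq_Icc hη hpos.ne' hneg.ne'
  have h0 : (0 : ℝ) ∈ Set.Icc a b := hIcc ▸ zero_mem_admissibleFractions
  have h1 : (1 : ℝ) ∈ Set.Icc a b := hIcc ▸ one_mem_admissibleFractions hge
  exact ⟨a, b, hL, hU, h0.1, h1.2, hIcc, Set.Icc_subset_Icc h0.1 h1.2⟩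

/-- The admissible range of investment fractions keeping wealth nonnegative across jumps
is the closed interval `[a, b]` with `a` the essential sup of `-1/η` on `{η > 0}` and
`b` the essential inf of `-1/η` on `{η < 0}`; both are (finite) real numbers,
`a ≤ 0 ≤ 1 ≤ b`, so in particular `[0,1] ⊆ [a,b]`. -/
theorem admissible_fraction_interval {E : Type*} [MeasurableSpace E]
    (κ : Measure E) [IsFiniteMeasure κ]
    (η : E → ℝ) (hη : Measurable η)
    (hge : ∀ᵐ e ∂κ, -1 ≤ η e)
    (hpos : 0 < κ {e | 0 < η e}) (hneg : 0 < κ {e | η e < 0}) :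
    ∃ a b : ℝ,
      essSup (fun e => ((-1 / η e : ℝ) : EReal)) (κ.restrict {e | 0 < η e}) = (a : EReal) ∧
      essInf (fun e => ((-1 / η e : ℝ) : EReal)) (κ.restrict {e | η e < 0}) = (b : EReal) ∧
      a ≤ 0 ∧ 1 ≤ b ∧
      {φ : ℝ | ∀ᵐ e ∂κ, 0 ≤ 1 + φ * η e} = Set.Icc a b ∧
      Set.Icc (0 : ℝ) 1 ⊆ Set.Icc a b :=
  admissible_fraction_interval_general κ η hη hge hpos hneg
end

section
/- Let α ∈ (0,1) and U(x) = x^{1−α}/(1−α). Let μ_d, r ∈ ℝ, σ > 0, let ν be a finite measure on a measurable space E and let η : E → ℝ be measurable with η(e) ≥ −1 for ν-a.e. e. Assume the function e ↦ (1 + max(η(e),0))^{1−α} is ν-integrable. Then the function F(φ) = φ(μ_d − r) − (1/2)αφ²σ² + ∫_E (U(1 + φη(e)) − U(1)) ν(de) is real-valued and continuous on [0,1], and there exists a unique φ* ∈ [0,1] such that F(φ*) = max_{φ∈[0,1]} F(φ). -/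
/-!
Every term of `F` is concave in the investment fraction: the linear term trivially, the
quadratic term strictly since `α σ² > 0`, and the jump integral because `U` is concave on
`[0, ∞)` and `φ ↦ 1 + φ η(e)` is affine with values in `[0, ∞)` when `η(e) ≥ -1`. The bound
`1 + φ η ≤ 1 + max(η, 0)` together with the integrability hypothesis dominates the jump
integrand uniformly in `φ ∈ [0, 1]`, which gives integrability and, by dominated convergence,
continuity. A continuous strictly concave function on the compact interval `[0, 1]` has
exactly one maximizer.
-/

open MeasureTheory Real

noncomputable def U (α x : ℝ) : ℝ := x ^ (1 - α) / (1 - α)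

open Set

lemma U_sub_U_one (α x : ℝ) : U α x - U α 1 = (x ^ (1 - α) - 1) / (1 - α) := by
  simp only [U, one_rpow]; ring

lemma continuous_U {α : ℝ} (hα : α < 1) : Continuous (U α) :=
  (continuous_rpow_const (by linarith)).div_const _

lemma concaveOn_U {α : ℝ} (hα₀ : 0 ≤ α) (hα₁ : α < 1) : ConcaveOn ℝ (Ici 0) (U α) := by
  have hβ : 0 < 1 - α := by linarith
  exact ((concaveOn_rpow hβ.le (by linarith)).smul (inv_nonneg.mpr hβ.le)).congr
    fun x _ => by simp [U, div_eq_inv_mul]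

lemma abs_U_sub_U_one_le {α x y : ℝ} (hα : α < 1) (hx : 0 ≤ x) (hxy : x ≤ y) :
    |U α x - U α 1| ≤ (y ^ (1 - α) + 1) / (1 - α) := by
  have hβ : 0 < 1 - α := by linarith
  have hx_pow : 0 ≤ x ^ (1 - α) := rpow_nonneg hx _
  have hxy_pow : x ^ (1 - α) ≤ y ^ (1 - α) := rpow_le_rpow hx hxy hβ.le
  rw [U_sub_U_one, abs_div, abs_of_pos hβ]
  gcongr
  exact abs_le.mpr ⟨by linarith, by linarith⟩

lemma one_add_mul_mem_Icc {φ t : ℝ} (hφ : φ ∈ Icc 0 1) (ht : -1 ≤ t) :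
    1 + φ * t ∈ Icc 0 (1 + max t 0) := by
  obtain ⟨hφ₀, hφ₁⟩ := hφ
  refine ⟨by nlinarith, ?_⟩
  rcases le_total 0 t with h | h
  · nlinarith [le_max_left t 0]
  · nlinarith [le_max_right t 0]

lemma concaveOn_integral {V E : Type*} [AddCommGroup V] [Module ℝ V] [MeasurableSpace E]
    {ν : Measure E} {s : Set V} {g : V → E → ℝ} (hs : Convex ℝ s)
    (hg : ∀ᵐ e ∂ν, ConcaveOn ℝ s (g · e)) (hint : ∀ x ∈ s, Integrable (g x) ν) :
    ConcaveOn ℝ s fun x => ∫ e, g x e ∂ν := by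
  refine ⟨hs, fun x hx y hy a b ha hb hab => ?_⟩
  have hax := (hint x hx).const_mul a
  have hby := (hint y hy).const_mul b
  calc a • ∫ e, g x e ∂ν + b • ∫ e, g y e ∂ν = ∫ e, (a • g x e + b • g y e) ∂ν := by
        simp only [smul_eq_mul, integral_add hax hby, integral_const_mul]
    _ ≤ ∫ e, g (a • x + b • y) e ∂ν :=
        integral_mono_ae (hax.add hby) (hint _ (hs hx hy ha hb hab))
          (hg.mono fun e he => he.2 hx hy ha hb hab)

lemma strictConcaveOn_mul_sub_mul_sq {c : ℝ} (hc : 0 < c) (b : ℝ) :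
    StrictConcaveOn ℝ univ fun x : ℝ => x * b - c * x ^ 2 := by
  refine ⟨convex_univ, fun x _ y _ hxy s t hs ht hst => ?_⟩
  obtain rfl : t = 1 - s := by linarith
  have hxy' : 0 < (x - y) ^ 2 := by positivity
  simp only [smul_eq_mul]
  nlinarith [mul_pos (mul_pos hc (mul_pos hs ht)) hxy']

lemma StrictConcaveOn.existsUnique_isMaxOn {V : Type*} [AddCommGroup V] [Module ℝ V]
    [TopologicalSpace V] {s : Set V} {f : V → ℝ} (hf : StrictConcaveOn ℝ s f)
    (hs : IsCompact s) (hne : s.Nonempty) (hcont : ContinuousOn f s) :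
    ∃! x, x ∈ s ∧ IsMaxOn f s x := by
  obtain ⟨x, hx, hmax⟩ := hs.exists_isMaxOn hne hcont
  exact ⟨x, ⟨hx, hmax⟩, fun y ⟨hy, hymax⟩ => hf.eq_of_isMaxOn hymax hmax hy hx⟩

section JumpGain

variable {E : Type*} [MeasurableSpace E] {ν : Measure E} {η : E → ℝ} {α : ℝ}

noncomputable def jumpGain (α : ℝ) (ν : Measure E) (η : E → ℝ) (φ : ℝ) : ℝ :=
  ∫ e, (U α (1 + φ * η e) - U α 1) ∂ν

lemma aestronglyMeasurable_U_jump (hα : α < 1) (hη : AEMeasurable η ν) (φ : ℝ) :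
    AEStronglyMeasurable (fun e => U α (1 + φ * η e) - U α 1) ν :=
  (((continuous_U hα).measurable.comp_aemeasurable
    ((hη.const_mul φ).const_add 1)).sub_const _).aestronglyMeasurable

lemma norm_U_jump_le (hα : α < 1) (hηge : ∀ᵐ e ∂ν, -1 ≤ η e) {φ : ℝ} (hφ : φ ∈ Icc 0 1) :
    ∀ᵐ e ∂ν, ‖U α (1 + φ * η e) - U α 1‖ ≤ ((1 + max (η e) 0) ^ (1 - α) + 1) / (1 - α) :=
  hηge.mono fun _ he =>
    have hmem := one_add_mul_mem_Icc hφ he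
    abs_U_sub_U_one_le hα hmem.1 hmem.2

lemma integrable_jump_bound [IsFiniteMeasure ν]
    (hint : Integrable (fun e => (1 + max (η e) 0) ^ (1 - α)) ν) :
    Integrable (fun e => ((1 + max (η e) 0) ^ (1 - α) + 1) / (1 - α)) ν :=
  (hint.add (integrable_const 1)).div_const _

lemma integrable_U_jump [IsFiniteMeasure ν] (hα : α < 1) (hη : AEMeasurable η ν)
    (hηge : ∀ᵐ e ∂ν, -1 ≤ η e) (hint : Integrable (fun e => (1 + max (η e) 0) ^ (1 - α)) ν)
    {φ : ℝ} (hφ : φ ∈ Icc 0 1) : Integrable (fun e => U α (1 + φ * η e) - U α 1) ν :=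
  (integrable_jump_bound hint).mono' (aestronglyMeasurable_U_jump hα hη φ)
    (norm_U_jump_le hα hηge hφ)

lemma continuousOn_jumpGain [IsFiniteMeasure ν] (hα : α < 1) (hη : AEMeasurable η ν)
    (hηge : ∀ᵐ e ∂ν, -1 ≤ η e) (hint : Integrable (fun e => (1 + max (η e) 0) ^ (1 - α)) ν) :
    ContinuousOn (jumpGain α ν η) (Icc 0 1) :=
  continuousOn_of_dominated (fun φ _ => aestronglyMeasurable_U_jump hα hη φ)
    (fun _ hφ => norm_U_jump_le hα hηge hφ) (integrable_jump_bound hint)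
    (ae_of_all _ fun _ => by have := continuous_U hα; fun_prop)

lemma concaveOn_U_jump (hα₀ : 0 ≤ α) (hα₁ : α < 1) {t : ℝ} (ht : -1 ≤ t) :
    ConcaveOn ℝ (Icc 0 1) fun φ => U α (1 + φ * t) - U α 1 := by
  have hcomp := (concaveOn_U hα₀ hα₁).comp_affineMap (AffineMap.lineMap (1 : ℝ) (1 + t))
  refine ((hcomp.subset (fun φ hφ => ?_) (convex_Icc 0 1)).add_const (-U α 1)).congr
    fun φ _ => ?_
  · simpa [AffineMap.lineMap_apply_ring', add_comm, mul_comm] using (one_add_mul_mem_Icc hφ ht).1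
  · simp [AffineMap.lineMap_apply_ring', add_comm, mul_comm, sub_eq_add_neg]

lemma concaveOn_jumpGain [IsFiniteMeasure ν] (hα₀ : 0 ≤ α) (hα₁ : α < 1)
    (hη : AEMeasurable η ν) (hηge : ∀ᵐ e ∂ν, -1 ≤ η e)
    (hint : Integrable (fun e => (1 + max (η e) 0) ^ (1 - α)) ν) :
    ConcaveOn ℝ (Icc 0 1) (jumpGain α ν η) :=
  concaveOn_integral (convex_Icc 0 1) (hηge.mono fun _ he => concaveOn_U_jump hα₀ hα₁ he)
    fun _ hφ => integrable_U_jump hα₁ hη hηge hint hφ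

end JumpGain

/-- For `α ∈ (0,1)`, the no-signal functional `F` is real-valued (its integrand is
integrable) and continuous on `[0,1]`, and it has a unique maximizer `φ* ∈ [0,1]`. -/
theorem exists_unique_maximizer_no_signal {E : Type*} [MeasurableSpace E]
    (α : ℝ) (hα : α ∈ Set.Ioo (0 : ℝ) 1)
    (μd r σ : ℝ) (hσ : 0 < σ)
    (ν : Measure E) [IsFiniteMeasure ν]
    (η : E → ℝ) (hη : Measurable η) (hηge : ∀ᵐ e ∂ν, -1 ≤ η e)
    (hint : Integrable (fun e => (1 + max (η e) 0) ^ (1 - α)) ν)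
    (F : ℝ → ℝ)
    (hF : F = fun φ => φ * (μd - r) - (1 / 2) * α * φ ^ 2 * σ ^ 2
        + ∫ e, (U α (1 + φ * η e) - U α 1) ∂ν) :
    (∀ φ ∈ Set.Icc (0 : ℝ) 1, Integrable (fun e => U α (1 + φ * η e) - U α 1) ν) ∧
    ContinuousOn F (Set.Icc 0 1) ∧
    ∃! φs : ℝ, φs ∈ Set.Icc (0 : ℝ) 1 ∧ ∀ φ ∈ Set.Icc (0 : ℝ) 1, F φ ≤ F φs := by
  obtain ⟨hα₀, hα₁⟩ := hα
  have hF' : F = (fun φ => φ * (μd - r) - (1 / 2 * α * σ ^ 2) * φ ^ 2) + jumpGain α ν η := by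
    rw [hF]; funext φ; simp only [Pi.add_apply, jumpGain]; ring
  have hquad := (strictConcaveOn_mul_sub_mul_sq (by positivity : 0 < 1 / 2 * α * σ ^ 2)
    (μd - r)).subset (subset_univ (Icc 0 1)) (convex_Icc 0 1)
  have hcont : ContinuousOn F (Icc 0 1) := by
    rw [hF']
    exact (Continuous.continuousOn (by fun_prop)).add
      (continuousOn_jumpGain hα₁ hη.aemeasurable hηge hint)
  refine ⟨fun φ hφ => integrable_U_jump hα₁ hη.aemeasurable hηge hint hφ, hcont, ?_⟩
  have hstrict : StrictConcaveOn ℝ (Icc 0 1) F :=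
    hF' ▸ hquad.add_concaveOn (concaveOn_jumpGain hα₀.le hα₁ hη.aemeasurable hηge hint)
  exact hstrict.existsUnique_isMaxOn isCompact_Icc (nonempty_Icc.2 zero_le_one) hcont
end

section
/- Let α > 0, α ≠ 1, U(x) = x^{1−α}/(1−α), and fix r, μ_d ∈ ℝ, σ > 0, T > 0. Let ν₀ be a finite measure on a measurable space E₀ and η₀ : E₀ → ℝ measurable with η₀ ≥ −1 ν₀-a.e.; let μ_s be a finite measure on a measurable space Z, let K be a Markov kernel from Z to a measurable space E₁, and let η₁ : E₁ → ℝ be measurable. Let S₀ ⊆ ℝ be nonempty with 1 + φη₀ ≥ 0 ν₀-a.e. for each φ ∈ S₀, and for each z ∈ Z let S(z) ⊆ ℝ be nonempty with 1 + φη₁ ≥ 0 K(z,·)-a.e. for each φ ∈ S(z). Assume: (i) for every φ ∈ S₀ the function e ↦ U(1+φη₀(e)) is ν₀-integrable and M₀ := sup_{φ∈S₀} { φ(μ_d−r) − (1/2)αφ²σ² + ∫_{E₀}(U(1+φη₀(e)) − U(1)) ν₀(de) } is a real number; (ii) for every z and every φ ∈ S(z) the function e ↦ U(1+φη₁(e))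 is K(z,·)-integrable, and the function G(z) := sup_{φ∈S(z)} ∫_{E₁}(U(1+φη₁(e)) − U(1)) K(z,de) is real-valued, measurable and μ_s-integrable. Set M := M₀ + ∫_Z G(z) μ_s(dz) and define v(t,x) := (x^{1−α}/(1−α))·exp((1−α)(r+M)(T−t)). Then v is infinitely differentiable on [0,T] × (0,∞), satisfies the terminal condition v(T,x) = U(x) for all x > 0, and for every (t,x) ∈ [0,T] × (0,∞) the Hamilton-Jacobi-Bellman equation holds: ∂_t v(t,x) + r x ∂_x v(t,x) + sup_{φ∈S₀} { φ x (μ_d−r) ∂_x v(t,x) + (1/2)σ²φ²x² ∂_{xx} v(t,x) + ∫_{E₀} (v(t, x(1+φη₀(e))) − v(t,x)) ν₀(de) } + ∫_Z sup_{φ∈S(z)} ( ∫_{E₁} (v(t, x(1+φη₁(e))) − v(t,x)) K(z,de) ) μ_s(dz) = 0. -/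
/-! Since `U` is homogeneous of degree `1 - α`, the candidate `v(t,x) = U(x) e^{c(T-t)}` with
`c = (1-α)(r+M)` turns every term of the Hamiltonian at `(t, x, φ)` into `x^(1-α) e^{c(T-t)}`
times the same term at `x = 1`, `t = T`. A nonnegative factor commutes with `sSup` and with
the integral over signals, so the Hamiltonian equals `x^(1-α) e^{c(T-t)} M`, which cancels
`∂ₜv + r x ∂ₓv = -M x^(1-α) e^{c(T-t)}`. -/

open MeasureTheory Real

lemma sSup_image_eq_const_mul_sSup_image {ι : Type*} {f g : ι → ℝ} {s : Set ι} {C : ℝ}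
    (hC : 0 ≤ C) (hfg : Set.EqOn f (fun i => C * g i) s) :
    sSup (f '' s) = C * sSup (g '' s) := by
  rw [Set.image_congr hfg, ← Set.image_image (C * ·), ← smul_eq_mul,
    ← Real.sSup_smul_of_nonneg hC]
  rfl

lemma mul_rpow_neg_self {x : ℝ} (hx : 0 < x) (a : ℝ) : x * x ^ (-a) = x ^ (1 - a) := by
  rw [sub_eq_add_neg, rpow_add hx, rpow_one]

section PowerUtility

variable {α : ℝ}

lemma U_mul {x y : ℝ} (hx : 0 ≤ x) (hy : 0 ≤ y) : U α (x * y) = x ^ (1 - α) * U α y := by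
  rw [U, U, mul_rpow hx hy, mul_div_assoc]

lemma one_sub_mul_U (hα : α ≠ 1) (x : ℝ) : (1 - α) * U α x = x ^ (1 - α) :=
  mul_div_cancel₀ _ (sub_ne_zero.2 hα.symm)

lemma contDiffOn_U (α : ℝ) {n : WithTop ℕ∞} : ContDiffOn ℝ n (U α) (Set.Ioi 0) :=
  fun _ hx => ((contDiffAt_rpow_const_of_ne (ne_of_gt hx)).div_const _).contDiffWithinAt

lemma hasDerivAt_U (hα : α ≠ 1) {x : ℝ} (hx : 0 < x) : HasDerivAt (U α) (x ^ (-α)) x := by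
  have h := (hasDerivAt_rpow_const (p := 1 - α) (Or.inl hx.ne')).div_const (1 - α)
  rwa [show 1 - α - 1 = -α by ring, mul_div_cancel_left₀ _ (sub_ne_zero.2 hα.symm)] at h

lemma deriv_deriv_U (hα : α ≠ 1) {x : ℝ} (hx : 0 < x) :
    deriv (deriv (U α)) x = -α * x ^ (-α - 1) := by
  have hderiv : deriv (U α) =ᶠ[nhds x] fun y => y ^ (-α) :=
    Filter.eventuallyEq_of_mem (Ioi_mem_nhds hx) fun y hy => (hasDerivAt_U hα hy).deriv
  rw [hderiv.deriv_eq]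
  exact (hasDerivAt_rpow_const (Or.inl hx.ne')).deriv

lemma integral_U_mul_sub_U {E : Type*} [MeasurableSpace E] (μ : Measure E) {f : E → ℝ}
    (hf : 0 ≤ᵐ[μ] f) {x : ℝ} (hx : 0 ≤ x) :
    ∫ e, (U α (x * f e) - U α x) ∂μ = x ^ (1 - α) * ∫ e, (U α (f e) - U α 1) ∂μ := by
  rw [← integral_const_mul]
  refine integral_congr_ae ?_
  filter_upwards [hf] with e he
  have hUx : U α x = x ^ (1 - α) * U α 1 := by rw [← U_mul hx zero_le_one, mul_one]
  rw [U_mul hx he, hUx, mul_sub]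

end PowerUtility

noncomputable def powerValue (α c T t x : ℝ) : ℝ := U α x * exp (c * (T - t))

section PowerValue

variable {α : ℝ} (c T : ℝ)

lemma contDiffOn_powerValue {n : WithTop ℕ∞} :
    ContDiffOn ℝ n (fun p : ℝ × ℝ => powerValue α c T p.1 p.2) {p | 0 < p.2} :=
  ((contDiffOn_U α).comp contDiff_snd.contDiffOn fun _ hp => hp).mul
    (contDiff_exp.comp (contDiff_const.mul (contDiff_const.sub contDiff_fst))).contDiffOn

lemma powerValue_self (x : ℝ) : powerValue α c T T x = U α x := by
  simp [powerValue]

lemma deriv_powerValue_time (t x : ℝ) :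
    deriv (fun s => powerValue α c T s x) t = -c * powerValue α c T t x := by
  have hexp : HasDerivAt (fun s => c * (T - s)) (-c) t := by
    simpa using ((hasDerivAt_id t).const_sub T).const_mul c
  unfold powerValue
  rw [((hexp.exp).const_mul (U α x)).deriv]
  ring

variable {c T}

lemma one_sub_mul_powerValue (hα : α ≠ 1) (t x : ℝ) :
    (1 - α) * powerValue α c T t x = x ^ (1 - α) * exp (c * (T - t)) := by
  rw [powerValue, ← mul_assoc, one_sub_mul_U hα]

lemma mul_deriv_powerValue (hα : α ≠ 1) {t x : ℝ} (hx : 0 < x) :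
    x * deriv (fun y => powerValue α c T t y) x = x ^ (1 - α) * exp (c * (T - t)) := by
  unfold powerValue
  rw [deriv_mul_const (hasDerivAt_U hα hx).differentiableAt, (hasDerivAt_U hα hx).deriv,
    ← mul_assoc, mul_rpow_neg_self hx]

lemma sq_mul_deriv_deriv_powerValue (hα : α ≠ 1) {t x : ℝ} (hx : 0 < x) :
    x ^ 2 * deriv (deriv (fun y => powerValue α c T t y)) x
      = -α * (x ^ (1 - α) * exp (c * (T - t))) := by
  have hderiv : deriv (fun y => powerValue α c T t y)
      = fun y => deriv (U α) y * exp (c * (T - t)) := by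
    unfold powerValue
    exact deriv_mul_const_field' _
  have hpow : x ^ 2 * x ^ (-α - 1) = x ^ (1 - α) := by
    rw [← rpow_natCast, ← rpow_add hx]
    congr 1
    push_cast
    ring
  rw [hderiv, deriv_mul_const_field, deriv_deriv_U hα hx, ← hpow]
  ring

lemma integral_powerValue_sub {E : Type*} [MeasurableSpace E] (μ : Measure E) {f : E → ℝ}
    (hf : 0 ≤ᵐ[μ] f) {t x : ℝ} (hx : 0 ≤ x) :
    ∫ e, (powerValue α c T t (x * f e) - powerValue α c T t x) ∂μ
      = x ^ (1 - α) * exp (c * (T - t)) * ∫ e, (U α (f e) - U α 1) ∂μ := by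
  unfold powerValue
  simp_rw [← sub_mul]
  rw [integral_mul_const, integral_U_mul_sub_U μ hf hx]
  ring

variable {E : Type*} [MeasurableSpace E] {t x : ℝ} {η : E → ℝ} {S : Set ℝ}

lemma sSup_hamiltonian_powerValue (hα : α ≠ 1) (hx : 0 < x) {ν : Measure E}
    (hS : ∀ φ ∈ S, ∀ᵐ e ∂ν, 0 ≤ 1 + φ * η e) (m σ : ℝ) :
    sSup ((fun φ => φ * x * m * deriv (fun y => powerValue α c T t y) x
        + (1 / 2) * σ ^ 2 * φ ^ 2 * x ^ 2 * deriv (deriv (fun y => powerValue α c T t y)) x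
        + ∫ e, (powerValue α c T t (x * (1 + φ * η e)) - powerValue α c T t x) ∂ν) '' S)
      = x ^ (1 - α) * exp (c * (T - t)) * sSup ((fun φ => φ * m - (1 / 2) * α * φ ^ 2 * σ ^ 2
        + ∫ e, (U α (1 + φ * η e) - U α 1) ∂ν) '' S) := by
  refine sSup_image_eq_const_mul_sSup_image (by positivity) fun φ hφ => ?_
  dsimp only
  rw [integral_powerValue_sub ν (f := fun e => 1 + φ * η e) (hS φ hφ) hx.le]
  linear_combination (φ * m) * mul_deriv_powerValue hα hx
    + (1 / 2 * σ ^ 2 * φ ^ 2) * sq_mul_deriv_deriv_powerValue hα hx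

lemma sSup_jump_powerValue (hx : 0 < x) {μ : Measure E}
    (hS : ∀ φ ∈ S, ∀ᵐ e ∂μ, 0 ≤ 1 + φ * η e) :
    sSup ((fun φ => ∫ e, (powerValue α c T t (x * (1 + φ * η e)) - powerValue α c T t x) ∂μ)
        '' S) = x ^ (1 - α) * exp (c * (T - t))
        * sSup ((fun φ => ∫ e, (U α (1 + φ * η e) - U α 1) ∂μ) '' S) :=
  sSup_image_eq_const_mul_sSup_image (by positivity) fun φ hφ =>
    integral_powerValue_sub μ (f := fun e => 1 + φ * η e) (hS φ hφ) hx.le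

end PowerValue

theorem value_function_solves_HJB_general
    {E₀ Z E₁ : Type*} [MeasurableSpace E₀] [MeasurableSpace Z] [MeasurableSpace E₁]
    (α : ℝ) (hα1 : α ≠ 1)
    (r μd σ T : ℝ)
    (ν₀ : Measure E₀)
    (μs : Measure Z)
    (K : ProbabilityTheory.Kernel Z E₁)
    (η₀ : E₀ → ℝ)
    (η₁ : E₁ → ℝ)
    (S₀ : Set ℝ)
    (hS₀adm : ∀ φ ∈ S₀, ∀ᵐ e ∂ν₀, 0 ≤ 1 + φ * η₀ e)
    (S : Z → Set ℝ)
    (hSadm : ∀ z, ∀ φ ∈ S z, ∀ᵐ e ∂(K z), 0 ≤ 1 + φ * η₁ e)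
    (G : Z → ℝ)
    (hG : G = fun z => sSup ((fun φ => ∫ e, (U α (1 + φ * η₁ e) - U α 1) ∂(K z)) '' S z))
    (M₀ M : ℝ)
    (hM₀ : M₀ = sSup ((fun φ => φ * (μd - r) - (1 / 2) * α * φ ^ 2 * σ ^ 2
        + ∫ e, (U α (1 + φ * η₀ e) - U α 1) ∂ν₀) '' S₀))
    (hM : M = M₀ + ∫ z, G z ∂μs)
    (v : ℝ → ℝ → ℝ)
    (hv : v = fun t x => x ^ (1 - α) / (1 - α) * Real.exp ((1 - α) * (r + M) * (T - t))) :
    ContDiffOn ℝ (⊤ : ℕ∞) (fun p : ℝ × ℝ => v p.1 p.2) (Set.Icc 0 T ×ˢ Set.Ioi 0) ∧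
    (∀ x > (0 : ℝ), v T x = U α x) ∧
    (∀ t ∈ Set.Icc (0 : ℝ) T, ∀ x > (0 : ℝ),
      deriv (fun s => v s x) t + r * x * deriv (fun y => v t y) x
      + sSup ((fun φ => φ * x * (μd - r) * deriv (fun y => v t y) x
          + (1 / 2) * σ ^ 2 * φ ^ 2 * x ^ 2 * deriv (deriv (fun y => v t y)) x
          + ∫ e, (v t (x * (1 + φ * η₀ e)) - v t x) ∂ν₀) '' S₀)
      + ∫ z, sSup ((fun φ => ∫ e, (v t (x * (1 + φ * η₁ e)) - v t x) ∂(K z)) '' S z) ∂μs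
      = 0) := by
  replace hv : v = powerValue α ((1 - α) * (r + M)) T := hv
  subst hv
  refine ⟨(contDiffOn_powerValue _ T).mono fun p hp => hp.2, fun x _ => powerValue_self _ T x,
    fun t _ x hx => ?_⟩
  rw [hG] at hM
  rw [deriv_powerValue_time, sSup_hamiltonian_powerValue hα1 hx hS₀adm, ← hM₀,
    integral_congr_ae (ae_of_all _ fun z => sSup_jump_powerValue hx (hSadm z)),
    integral_const_mul]
  linear_combination -(r + M) * one_sub_mul_powerValue hα1 t x + r * mul_deriv_powerValue hα1 hx
    - (x ^ (1 - α) * exp ((1 - α) * (r + M) * (T - t))) * hM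

/-- Verification theorem (analytic part): the candidate value function
`v(t,x) = U(x)·exp((1-α)(r+M)(T-t))` is smooth on `[0,T] × (0,∞)`, satisfies the
terminal condition `v(T,·) = U`, and solves the Hamilton-Jacobi-Bellman equation
with jump signals. -/
theorem value_function_solves_HJB
    {E₀ Z E₁ : Type*} [MeasurableSpace E₀] [MeasurableSpace Z] [MeasurableSpace E₁]
    (α : ℝ) (hα : 0 < α) (hα1 : α ≠ 1)
    (r μd σ T : ℝ) (hσ : 0 < σ) (hT : 0 < T)
    (ν₀ : Measure E₀) [IsFiniteMeasure ν₀]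
    (μs : Measure Z) [IsFiniteMeasure μs]
    (K : ProbabilityTheory.Kernel Z E₁) [ProbabilityTheory.IsMarkovKernel K]
    (η₀ : E₀ → ℝ) (hη₀ : Measurable η₀) (hη₀ge : ∀ᵐ e ∂ν₀, -1 ≤ η₀ e)
    (η₁ : E₁ → ℝ) (hη₁ : Measurable η₁)
    (S₀ : Set ℝ) (hS₀ : S₀.Nonempty)
    (hS₀adm : ∀ φ ∈ S₀, ∀ᵐ e ∂ν₀, 0 ≤ 1 + φ * η₀ e)
    (S : Z → Set ℝ) (hS : ∀ z, (S z).Nonempty)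
    (hSadm : ∀ z, ∀ φ ∈ S z, ∀ᵐ e ∂(K z), 0 ≤ 1 + φ * η₁ e)
    (hint₀ : ∀ φ ∈ S₀, Integrable (fun e => U α (1 + φ * η₀ e)) ν₀)
    (hbdd₀ : BddAbove ((fun φ => φ * (μd - r) - (1 / 2) * α * φ ^ 2 * σ ^ 2
        + ∫ e, (U α (1 + φ * η₀ e) - U α 1) ∂ν₀) '' S₀))
    (hint₁ : ∀ z, ∀ φ ∈ S z, Integrable (fun e => U α (1 + φ * η₁ e)) (K z))
    (hGbdd : ∀ z, BddAbove ((fun φ => ∫ e, (U α (1 + φ * η₁ e) - U α 1) ∂(K z)) '' S z))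
    (G : Z → ℝ)
    (hG : G = fun z => sSup ((fun φ => ∫ e, (U α (1 + φ * η₁ e) - U α 1) ∂(K z)) '' S z))
    (hGmeas : Measurable G) (hGint : Integrable G μs)
    (M₀ M : ℝ)
    (hM₀ : M₀ = sSup ((fun φ => φ * (μd - r) - (1 / 2) * α * φ ^ 2 * σ ^ 2
        + ∫ e, (U α (1 + φ * η₀ e) - U α 1) ∂ν₀) '' S₀))
    (hM : M = M₀ + ∫ z, G z ∂μs)
    (v : ℝ → ℝ → ℝ)
    (hv : v = fun t x => x ^ (1 - α) / (1 - α) * Real.exp ((1 - α) * (r + M) * (T - t))) :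
    ContDiffOn ℝ (⊤ : ℕ∞) (fun p : ℝ × ℝ => v p.1 p.2) (Set.Icc 0 T ×ˢ Set.Ioi 0) ∧
    (∀ x > (0 : ℝ), v T x = U α x) ∧
    (∀ t ∈ Set.Icc (0 : ℝ) T, ∀ x > (0 : ℝ),
      deriv (fun s => v s x) t + r * x * deriv (fun y => v t y) x
      + sSup ((fun φ => φ * x * (μd - r) * deriv (fun y => v t y) x
          + (1 / 2) * σ ^ 2 * φ ^ 2 * x ^ 2 * deriv (deriv (fun y => v t y)) x
          + ∫ e, (v t (x * (1 + φ * η₀ e)) - v t x) ∂ν₀) '' S₀)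
      + ∫ z, sSup ((fun φ => ∫ e, (v t (x * (1 + φ * η₁ e)) - v t x) ∂(K z)) '' S z) ∂μs
      = 0) :=
  value_function_solves_HJB_general α hα1 r μd σ T ν₀ μs K η₀ η₁ S₀ hS₀adm S hSadm G hG M₀ M hM₀ hM
    v hv
end

section
/- Let m ∈ ℝ, s > 0, let γ = N_{m,s}, let σ̂ > 0 and c ∈ ℝ, and define η(x) = exp(σ̂x + c) − 1. Then the set {φ ∈ ℝ : 1 + φ·η(x) ≥ 0 for γ-a.e. x} equals the closed interval [0, 1]. -/
/-!
A Gaussian law charges every open set, so an almost-sure inequality between continuous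
functions holds everywhere. As `x` ranges over `ℝ`, `exp (σ̂x + c)` sweeps out all of `(0, ∞)`,
so the admissible fractions are those with `1 + φ (y - 1) ≥ 0` for every `y > 0`: letting
`y → ∞` forces `φ ≥ 0` and letting `y → 0` forces `φ ≤ 1`.
-/

open MeasureTheory ProbabilityTheory Set
open scoped NNReal

theorem MeasureTheory.Measure.ae_iff_forall_of_isClosed {X : Type*} [TopologicalSpace X]
    [MeasurableSpace X] (μ : Measure X) [μ.IsOpenPosMeasure] {p : X → Prop}
    (hp : IsClosed {x | p x}) : (∀ᵐ x ∂μ, p x) ↔ ∀ x, p x := by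
  refine ⟨fun h x => ?_, ae_of_all μ⟩
  have hdense := μ.dense_of_ae h
  rw [← mem_ofPred_eq (p := p), ← hp.closure_eq, hdense.closure_eq]
  exact mem_univ x

theorem ProbabilityTheory.isOpenPosMeasure_gaussianReal (m : ℝ) {v : ℝ≥0} (hv : v ≠ 0) :
    (gaussianReal m v).IsOpenPosMeasure :=
  (gaussianReal_absolutelyContinuous' m hv).isOpenPosMeasure

theorem Real.range_exp_mul_add {σ : ℝ} (hσ : σ ≠ 0) (c : ℝ) :
    range (fun x => Real.exp (σ * x + c)) = Ioi 0 := by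
  have hsurj : Function.Surjective (fun x : ℝ => σ * x + c) := fun y =>
    ⟨(y - c) / σ, by field_simp; ring⟩
  rw [← Real.range_exp]
  exact hsurj.range_comp Real.exp

theorem forall_pos_one_add_mul_sub_one_nonneg_iff {φ : ℝ} :
    (∀ y ∈ Ioi (0 : ℝ), 0 ≤ 1 + φ * (y - 1)) ↔ φ ∈ Icc 0 1 := by
  refine ⟨fun h => ⟨?_, ?_⟩, fun ⟨hφ₀, hφ₁⟩ y hy => ?_⟩
  · by_contra! hφ
    have hy : 0 < 1 - 2 / φ := by have := div_neg_of_pos_of_neg two_pos hφ; linarith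
    have hval : 1 + φ * (1 - 2 / φ - 1) = -1 := by field_simp [hφ.ne]; ring
    linarith [h _ hy]
  · by_contra! hφ
    have hφ₀ : 0 < φ := one_pos.trans hφ
    have hy : 0 < (φ - 1) / (2 * φ) := div_pos (by linarith) (by linarith)
    have hval : 1 + φ * ((φ - 1) / (2 * φ) - 1) = (1 - φ) / 2 := by field_simp; ring
    linarith [h _ hy]
  · have hφy : 0 ≤ φ * y := mul_nonneg hφ₀ (mem_Ioi.mp hy).le
    linarith

/-- For lognormal jumps `η(x) = exp(σ̂x + c) - 1` with Gaussian marks, the set of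
investment fractions keeping wealth nonnegative across jumps is exactly `[0,1]`. -/
theorem admissible_set_eq_unit_interval_gaussian
    (m : ℝ) (s : ℝ≥0) (hs : 0 < s) (σh : ℝ) (hσh : 0 < σh) (c : ℝ) :
    {φ : ℝ | ∀ᵐ x ∂(gaussianReal m s), 0 ≤ 1 + φ * (Real.exp (σh * x + c) - 1)} =
      Set.Icc 0 1 := by
  have := isOpenPosMeasure_gaussianReal m hs.ne'
  ext φ
  rw [mem_ofPred_eq, Measure.ae_iff_forall_of_isClosed _ (isClosed_le continuous_const (by fun_prop)),
    ← forall_pos_one_add_mul_sub_one_nonneg_iff, ← Real.range_exp_mul_add hσh.ne' c,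
    forall_mem_range]
end

section
/- Let α ∈ (0,1), σ̂ > 0, c ∈ ℝ and ρ ∈ (−1, 1). Then the function z ↦ sup_{φ∈[0,1]} ∫_ℝ ((1 + φ(exp(σ̂y + c) − 1))^{1−α} − 1) N_{ρz, 1−ρ²}(dy) is real-valued and continuous on ℝ; in particular it is Borel measurable. -/
open MeasureTheory ProbabilityTheory Real
open scoped NNReal

/-!
Translating the Gaussian `N(ρz, v)` to `N(0, v)` moves the signal `z` into the integrand. For
`φ ∈ [0, 1]` the base `1 + φ (eˣ - 1)` lies between `1` and `eˣ`, so it is positive and its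
`p`-th power is at most `1 + e^{px}`, for every real exponent `p`. Hence, locally uniformly in
`(z, φ)`, the integrand is dominated by a multiple of `1 + e^{pσy}`, which is integrable against
any Gaussian; dominated convergence makes the expected utility jointly continuous on
`ℝ × [0, 1]`, and a supremum over the compact factor `[0, 1]` of a jointly continuous function is
continuous.
-/

open Set

section CompactSupremum

variable {X Y Z : Type*} [TopologicalSpace X] [TopologicalSpace Y]
  [ConditionallyCompleteLinearOrder Z] [TopologicalSpace Z] [OrderTopology Z]
  {f : X → Y → Z} {K : Set Y}

theorem IsCompact.bddAbove_image_of_continuous_subtype (hK : IsCompact K)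
    (hf : Continuous fun p : X × K => f p.1 p.2) (x : X) : BddAbove (f x '' K) := by
  have : CompactSpace K := isCompact_iff_compactSpace.mp hK
  rw [image_eq_range]
  exact (isCompact_range (hf.comp (Continuous.prodMk_right x))).bddAbove

theorem IsCompact.continuous_sSup_of_continuous_subtype (hK : IsCompact K)
    (hf : Continuous fun p : X × K => f p.1 p.2) : Continuous fun x => sSup (f x '' K) := by
  have : CompactSpace K := isCompact_iff_compactSpace.mp hK
  simpa only [image_univ, ← image_eq_range] using
    isCompact_univ.continuous_sSup (f := fun x (k : K) => f x k) hf

end CompactSupremum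

theorem continuous_integral_of_norm_le_mul {X α E : Type*} [TopologicalSpace X]
    [FirstCountableTopology X] [MeasurableSpace α] {μ : Measure α} [NormedAddCommGroup E]
    [NormedSpace ℝ E] {F : X → α → E} {C : X → ℝ} {H : α → ℝ}
    (hF_meas : ∀ x, AEStronglyMeasurable (F x) μ) (hF_cont : ∀ a, Continuous fun x => F x a)
    (hC : Continuous C) (hH : Integrable H μ) (hH_nonneg : 0 ≤ H)
    (hF_le : ∀ x a, ‖F x a‖ ≤ C x * H a) :
    Continuous fun x => ∫ a, F x a ∂μ := by
  refine continuous_iff_continuousAt.2 fun x₀ => ?_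
  refine continuousAt_of_dominated (bound := fun a => (C x₀ + 1) * H a)
    (.of_forall hF_meas) ?_ (hH.const_mul _) (ae_of_all _ fun a => (hF_cont a).continuousAt)
  filter_upwards [hC.continuousAt.eventually (gt_mem_nhds (lt_add_one (C x₀)))] with x hx
  exact ae_of_all _ fun a => (hF_le x a).trans (mul_le_mul_of_nonneg_right hx.le (hH_nonneg a))

lemma one_add_mul_sub_one_mem_uIcc {φ : ℝ} (hφ : φ ∈ Icc (0 : ℝ) 1) (x : ℝ) :
    1 + φ * (x - 1) ∈ uIcc 1 x := by
  obtain ⟨hφ0, hφ1⟩ := hφ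
  rcases le_total 1 x with h | h
  · rw [uIcc_of_le h]; constructor <;> nlinarith
  · rw [uIcc_of_ge h]; constructor <;> nlinarith

lemma one_add_mul_sub_one_pos {φ x : ℝ} (hφ : φ ∈ Icc (0 : ℝ) 1) (hx : 0 < x) :
    0 < 1 + φ * (x - 1) :=
  (lt_min one_pos hx).trans_le (one_add_mul_sub_one_mem_uIcc hφ x).1

lemma one_add_mul_sub_one_rpow_le {φ x : ℝ} (hφ : φ ∈ Icc (0 : ℝ) 1) (hx : 0 < x) (p : ℝ) :
    (1 + φ * (x - 1)) ^ p ≤ 1 + x ^ p := by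
  have hmem := one_add_mul_sub_one_mem_uIcc hφ x
  have hxp := rpow_nonneg hx.le p
  rcases le_total 0 p with hp | hp
  · calc (1 + φ * (x - 1)) ^ p ≤ max 1 x ^ p :=
          rpow_le_rpow (one_add_mul_sub_one_pos hφ hx).le hmem.2 hp
      _ ≤ 1 + x ^ p := by
          rcases max_choice 1 x with h | h <;> rw [h] <;> simp [hxp]
  · calc (1 + φ * (x - 1)) ^ p ≤ min 1 x ^ p :=
          rpow_le_rpow_of_nonpos (lt_min one_pos hx) hmem.1 hp
      _ ≤ 1 + x ^ p := by
          rcases min_choice 1 x with h | h <;> rw [h] <;> simp [hxp]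

section GaussianUtility

variable (p σ c ρ : ℝ)

lemma continuous_shifted_utility_integrand :
    Continuous fun w : (ℝ × Icc (0 : ℝ) 1) × ℝ =>
      (1 + (w.1.2 : ℝ) * (exp (σ * (w.2 + ρ * w.1.1) + c) - 1)) ^ p - 1 := by
  refine .sub (.rpow_const (by fun_prop) fun w => Or.inl ?_) continuous_const
  exact (one_add_mul_sub_one_pos w.1.2.2 (exp_pos _)).ne'

lemma norm_shifted_utility_integrand_le {φ : ℝ} (hφ : φ ∈ Icc (0 : ℝ) 1) (z y : ℝ) :
    ‖(1 + φ * (exp (σ * (y + ρ * z) + c) - 1)) ^ p - 1‖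
      ≤ (2 + exp (p * (σ * ρ * z + c))) * (1 + exp (p * σ * y)) := by
  have hbase := one_add_mul_sub_one_pos hφ (exp_pos (σ * (y + ρ * z) + c))
  have hpow : exp (σ * (y + ρ * z) + c) ^ p = exp (p * (σ * ρ * z + c)) * exp (p * σ * y) := by
    rw [← exp_mul, ← exp_add]; ring_nf
  have hle := one_add_mul_sub_one_rpow_le hφ (exp_pos (σ * (y + ρ * z) + c)) p
  rw [hpow] at hle
  have h₁ := exp_pos (p * (σ * ρ * z + c))
  have h₂ := exp_pos (p * σ * y)
  rw [Real.norm_eq_abs, abs_le]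
  constructor <;> nlinarith [rpow_pos_of_pos hbase p]

lemma integral_gaussianReal_utility_eq (v : ℝ≥0) (z φ : ℝ) :
    ∫ y, ((1 + φ * (exp (σ * y + c) - 1)) ^ p - 1) ∂gaussianReal (ρ * z) v
      = ∫ y, ((1 + φ * (exp (σ * (y + ρ * z) + c) - 1)) ^ p - 1) ∂gaussianReal 0 v := by
  rw [← zero_add (ρ * z), ← gaussianReal_map_add_const, integral_map (by fun_prop)]
  · simp only [zero_add]
  · exact Measurable.aestronglyMeasurable (by fun_prop)

theorem continuous_integral_gaussianReal_utility (v : ℝ≥0) :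
    Continuous fun q : ℝ × Icc (0 : ℝ) 1 =>
      ∫ y, ((1 + (q.2 : ℝ) * (exp (σ * y + c) - 1)) ^ p - 1) ∂gaussianReal (ρ * q.1) v := by
  simp only [integral_gaussianReal_utility_eq]
  have hG := continuous_shifted_utility_integrand p σ c ρ
  refine continuous_integral_of_norm_le_mul
    (C := fun q => 2 + exp (p * (σ * ρ * q.1 + c))) (H := fun y => 1 + exp (p * σ * y))
    (fun q => (hG.comp (Continuous.prodMk_right q)).aestronglyMeasurable)
    (fun y => hG.comp (Continuous.prodMk_left y)) (by fun_prop)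
    ((integrable_const 1).add (integrable_exp_mul_gaussianReal _))
    (fun y => by positivity) fun q y => norm_shifted_utility_integrand_le p σ c ρ q.2.2 q.1 y

end GaussianUtility

theorem optimal_conditional_utility_continuous_general
    (α : ℝ) (σh c : ℝ)
    (ρ : ℝ)
    (g : ℝ → ℝ)
    (hg : g = fun z => sSup ((fun φ =>
        ∫ y, ((1 + φ * (Real.exp (σh * y + c) - 1)) ^ (1 - α) - 1)
          ∂(gaussianReal (ρ * z) (Real.toNNReal (1 - ρ ^ 2)))) '' Set.Icc (0 : ℝ) 1)) :
    (∀ z : ℝ, BddAbove ((fun φ =>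
        ∫ y, ((1 + φ * (Real.exp (σh * y + c) - 1)) ^ (1 - α) - 1)
          ∂(gaussianReal (ρ * z) (Real.toNNReal (1 - ρ ^ 2)))) '' Set.Icc (0 : ℝ) 1)) ∧
    Continuous g ∧ Measurable g := by
  have hF := continuous_integral_gaussianReal_utility (1 - α) σh c ρ (1 - ρ ^ 2).toNNReal
  have hg_cont : Continuous g := hg ▸ isCompact_Icc.continuous_sSup_of_continuous_subtype hF
  exact ⟨isCompact_Icc.bddAbove_image_of_continuous_subtype hF, hg_cont, hg_cont.measurable⟩

/-- The optimal conditional expected utility increment, as a function of the signal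
value `z`, is real-valued (the supremum is over a nonempty set bounded above) and
continuous on `ℝ`; in particular it is Borel measurable. -/
theorem optimal_conditional_utility_continuous
    (α : ℝ) (hα : α ∈ Set.Ioo (0 : ℝ) 1) (σh c : ℝ) (hσh : 0 < σh)
    (ρ : ℝ) (hρ : ρ ∈ Set.Ioo (-1 : ℝ) 1)
    (g : ℝ → ℝ)
    (hg : g = fun z => sSup ((fun φ =>
        ∫ y, ((1 + φ * (Real.exp (σh * y + c) - 1)) ^ (1 - α) - 1)
          ∂(gaussianReal (ρ * z) (Real.toNNReal (1 - ρ ^ 2)))) '' Set.Icc (0 : ℝ) 1)) :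
    (∀ z : ℝ, BddAbove ((fun φ =>
        ∫ y, ((1 + φ * (Real.exp (σh * y + c) - 1)) ^ (1 - α) - 1)
          ∂(gaussianReal (ρ * z) (Real.toNNReal (1 - ρ ^ 2)))) '' Set.Icc (0 : ℝ) 1)) ∧
    Continuous g ∧ Measurable g :=
  optimal_conditional_utility_continuous_general α σh c ρ g hg
end
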